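/- arXiv:math/0601150 — 2 statements merged into one kernel-verified Lean document; each statement's English description precedes it below -/
import Mathlib

section
/- Let R be an integral domain, l a positive integer, and 𝐯 ∈ Rˣ a unit such that 𝐯^{2l} = 1 and 𝐯^{2t} ≠ 1 for all 0 < t < l. Then for natural numbers a, t, if l divides a but l does not divide t, the balanced Gaussian binomial coefficient satisfies [a, t]_𝐯 = 0 in R. -/
/-- The Gaussian binomial polynomial `B(m,k) ∈ ℤ[q]`, determined by the recursion
`B(m,0) = 1`, `B(0,k) = 0` for `k > 0`, and `B(m,k) = B(m-1,k-1) + q^k · B(m-1,k)`. -/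
noncomputable def gaussBinomialPoly : ℕ → ℕ → Polynomial ℤ
  | _, 0 => 1
  | 0, _ + 1 => 0
  | m + 1, k + 1 =>
      gaussBinomialPoly m k + Polynomial.X ^ (k + 1) * gaussBinomialPoly m (k + 1)

/-- The balanced Gaussian binomial coefficient `[m, k]_w = w^{-k(m-k)} · B(m,k)(w²)`
attached to a unit `w` of a commutative ring `R`. -/
noncomputable def balancedGaussBinomial {R : Type*} [CommRing R] (w : Rˣ) (m k : ℕ) : R :=
  ((w ^ (-((k : ℤ) * ((m : ℤ) - (k : ℤ))))) : Rˣ) *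
    Polynomial.aeval ((w : R) ^ 2) (gaussBinomialPoly m k)

open Polynomial

lemma gaussBinomialPoly_zero (m : ℕ) : gaussBinomialPoly m 0 = 1 := by
  cases m <;> rfl

lemma gaussBinomialPoly_succ_succ (m k : ℕ) :
    gaussBinomialPoly (m + 1) (k + 1) =
      gaussBinomialPoly m k + X ^ (k + 1) * gaussBinomialPoly m (k + 1) := rfl

/-- The key identity `(q^k - 1) · B(m, k) = (q^m - 1) · B(m-1, k-1)`, coming from
`B(m,k) = [m]! / ([k]! [m-k]!)`. -/
lemma gaussBinomialPoly_key (m k : ℕ) :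
    (X ^ (k + 1) - 1) * gaussBinomialPoly (m + 1) (k + 1) =
      (X ^ (m + 1) - 1) * gaussBinomialPoly m k := by
  induction m generalizing k with
  | zero =>
    cases k with
    | zero => simp [gaussBinomialPoly]
    | succ j => simp [gaussBinomialPoly]
  | succ m ih =>
    cases k with
    | zero =>
      have h0 := ih 0
      rw [gaussBinomialPoly_zero] at h0
      rw [gaussBinomialPoly_succ_succ, gaussBinomialPoly_zero]
      linear_combination (X : Polynomial ℤ) * h0
    | succ j =>
      have h2 := ih (j + 1)
      have h3 := ih j
      have h4 := gaussBinomialPoly_succ_succ m j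
      rw [gaussBinomialPoly_succ_succ]
      linear_combination (X ^ (j + 2) : Polynomial ℤ) * h2 + (X : Polynomial ℤ) * h3
        - (X : Polynomial ℤ) * (X ^ (m + 1) - 1) * h4

/-- If `𝐯` is a unit of an integral domain with `𝐯^{2l} = 1` and `𝐯^{2t} ≠ 1` for `0 < t < l`,
then `[a, t]_𝐯 = 0` whenever `l` divides `a` but `l` does not divide `t`. -/
theorem balancedGaussBinomial_eq_zero_of_dvd_of_not_dvd {R : Type*} [CommRing R] [IsDomain R]
    (l : ℕ) (hl : 0 < l) (v : Rˣ) (h1 : v ^ (2 * l) = 1)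
    (h2 : ∀ t : ℕ, 0 < t → t < l → v ^ (2 * t) ≠ 1)
    (a t : ℕ) (ha : l ∣ a) (ht : ¬ l ∣ t) :
    balancedGaussBinomial v a t = 0 := by
  obtain ⟨t', rfl⟩ : ∃ t', t = t' + 1 := by
    cases t with
    | zero => exact absurd (dvd_zero l) ht
    | succ t' => exact ⟨t', rfl⟩
  suffices h : Polynomial.aeval ((v : R) ^ 2) (gaussBinomialPoly a (t' + 1)) = 0 by
    simp [balancedGaussBinomial, h]
  cases a with
  | zero => simp [gaussBinomialPoly]
  | succ a' =>
    have key := congrArg (Polynomial.aeval ((v : R) ^ 2)) (gaussBinomialPoly_key a' t')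
    simp only [map_mul, map_sub, map_pow, map_one, Polynomial.aeval_X] at key
    -- q^(a'+1) = 1
    obtain ⟨s, hs⟩ := ha
    have hu : v ^ (2 * (a' + 1)) = 1 := by
      rw [hs, show 2 * (l * s) = 2 * l * s from by ring, pow_mul, h1, one_pow]
    have hqa : (((v : R)) ^ 2) ^ (a' + 1) = 1 := by
      have hc := congrArg (fun u : Rˣ => (u : R)) hu
      push_cast at hc
      rw [← pow_mul]
      exact hc
    -- q^(t'+1) ≠ 1
    have hqt : (((v : R)) ^ 2) ^ (t' + 1) ≠ 1 := by
      intro hq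
      set T := t' + 1 with hT
      have huT : v ^ (2 * T) = 1 := by
        ext
        push_cast
        rw [pow_mul]
        exact hq
      obtain ⟨q, r, hrpos, hrlt, hTeq⟩ : ∃ q r, 0 < r ∧ r < l ∧ T = l * q + r :=
        ⟨T / l, T % l, Nat.pos_of_ne_zero (fun h0 => ht (Nat.dvd_of_mod_eq_zero h0)),
          Nat.mod_lt T hl, (Nat.div_add_mod T l).symm⟩
      rw [hTeq, show 2 * (l * q + r) = 2 * l * q + 2 * r from by ring, pow_add, pow_mul,
        h1, one_pow, one_mul] at huT
      exact h2 r hrpos hrlt huT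
    rw [hqa] at key
    simp only [sub_self, zero_mul, mul_eq_zero] at key
    rcases key with h | h
    · exact absurd (sub_eq_zero.mp h) hqt
    · exact h
end

section
/- Let K be a finite field and F a subfield of K, with q = |F| and ℓ = [K : F]. Let V be a K-vector space, n a positive integer, and (U₁, …, Uₙ) an n-tuple of F-submodules of V (V regarded as an F-vector space by restriction of scalars). If some Uᵢ is not closed under scalar multiplication by K, then Φ_ℓ(q) divides the cardinality of the (finite) set {(λ·U₁, …, λ·Uₙ) : λ ∈ Kˣ} of n-tuples of F-submodules, where λ·Uᵢ denotes the image of Uᵢ under v ↦ λ·v. -/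
/-!
The scalars `c ∈ K` with `c • Uᵢ ⊆ Uᵢ` for all `i` form an `F`-subalgebra of `K`, hence an
intermediate field `L`, proper because some `Uᵢ` is not `K`-stable. The stabilizer of the tuple in
`Kˣ` is `Lˣ`, so the orbit has `(q^ℓ - 1)/(q^d - 1)` elements with `d = [L : F]` a proper divisor
of `ℓ`; and `(X^d - 1) Φ_ℓ` divides `X^ℓ - 1`.
-/

open Polynomial Pointwise Module

theorem cyclotomic_eval_dvd_of_mul_eq {R : Type*} [CommRing R] [IsDomain R] {d l : ℕ} {q N : R}
    (hd : d ∈ l.properDivisors) (hq : q ^ d ≠ 1) (h : N * (q ^ d - 1) = q ^ l - 1) :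
    (cyclotomic l R).eval q ∣ N := by
  have hdvd := map_dvd (evalRingHom q)
    (X_pow_sub_one_mul_cyclotomic_dvd_X_pow_sub_one_of_dvd R hd)
  simp only [coe_evalRingHom, eval_mul, eval_sub, eval_pow, eval_X, eval_one] at hdvd
  rw [← h, mul_comm N] at hdvd
  exact (mul_dvd_mul_iff_left (sub_ne_zero.mpr hq)).mp hdvd

theorem IntermediateField.finrank_mem_properDivisors {F K : Type*} [Field F] [Field K]
    [Algebra F K] [FiniteDimensional F K] {L : IntermediateField F K} (hL : L ≠ ⊤) :
    finrank F L ∈ (finrank F K).properDivisors := by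
  refine Nat.mem_properDivisors.mpr ⟨⟨finrank L K, (finrank_mul_finrank F L K).symm⟩, ?_⟩
  by_contra! h
  exact hL (eq_of_le_of_finrank_le le_top (by rwa [finrank_top']))

namespace Submodule

variable {F K V ι : Type*}

section Semiring

variable [CommSemiring F] [Semiring K] [Algebra F K] [AddCommMonoid V] [Module K V] [Module F V]
  [IsScalarTower F K V]

variable (K) in
def scalarStabilizer (U : ι → Submodule F V) : Subalgebra F K where
  carrier := {c | ∀ i, ∀ u ∈ U i, c • u ∈ U i}
  mul_mem' ha hb i u hu := by rw [mul_smul]; exact ha i _ (hb i u hu)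
  add_mem' ha hb i u hu := by rw [add_smul]; exact add_mem (ha i u hu) (hb i u hu)
  algebraMap_mem' r i u hu := by rw [algebraMap_smul]; exact (U i).smul_mem r hu

theorem mem_scalarStabilizer {U : ι → Submodule F V} {c : K} :
    c ∈ scalarStabilizer K U ↔ ∀ i, ∀ u ∈ U i, c • u ∈ U i :=
  Iff.rfl

end Semiring

section Field

variable [Field F] [Field K] [Algebra F K] [AddCommGroup V] [Module K V] [Module F V]
  [IsScalarTower F K V]

variable (K) in
def scalarStabilizerField [Algebra.IsAlgebraic F K] (U : ι → Submodule F V) :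
    IntermediateField F K :=
  subalgebraEquivIntermediateField (scalarStabilizer K U)

theorem mem_scalarStabilizerField [Algebra.IsAlgebraic F K] {U : ι → Submodule F V} {c : K} :
    c ∈ scalarStabilizerField K U ↔ ∀ i, ∀ u ∈ U i, c • u ∈ U i :=
  mem_subalgebraEquivIntermediateField

theorem units_smul_le_iff {c : Kˣ} {S : Submodule F V} :
    c • S ≤ S ↔ ∀ u ∈ S, (c : K) • u ∈ S :=
  Set.smul_set_subset_iff

theorem range_map_lsmul_eq_orbit (U : ι → Submodule F V) :
    (Set.range fun c : Kˣ => fun i => (U i).map ((LinearMap.lsmul K V (c : K)).restrictScalars F))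
      = MulAction.orbit Kˣ U :=
  rfl

theorem mem_stabilizer_iff_mem_scalarStabilizerField [Algebra.IsAlgebraic F K]
    {U : ι → Submodule F V} {c : Kˣ} :
    c ∈ MulAction.stabilizer Kˣ U ↔ (c : K) ∈ scalarStabilizerField K U := by
  have hmem (c : Kˣ) : (c : K) ∈ scalarStabilizerField K U ↔ ∀ i, c • U i ≤ U i := by
    simp only [mem_scalarStabilizerField, units_smul_le_iff]
  rw [MulAction.mem_stabilizer_iff, hmem]
  refine ⟨fun h i => (congrFun h i).le, fun h => funext fun i => le_antisymm (h i) ?_⟩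
  have hinv : ∀ i, c⁻¹ • U i ≤ U i := (hmem c⁻¹).mp <| by
    rw [Units.val_inv_eq_inv_val]
    exact inv_mem ((hmem c).mpr h)
  calc U i = c • c⁻¹ • U i := (smul_inv_smul c _).symm
    _ ≤ c • U i := map_mono (hinv i)

theorem stabilizer_eq_range_units_map [Algebra.IsAlgebraic F K] (U : ι → Submodule F V) :
    MulAction.stabilizer Kˣ U =
      (Units.map ((scalarStabilizerField K U).val : scalarStabilizerField K U →* K)).range := by
  ext c
  rw [mem_stabilizer_iff_mem_scalarStabilizerField, MonoidHom.mem_range]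
  refine ⟨fun h => ⟨Units.mk0 ⟨c, h⟩ (Subtype.coe_ne_coe.mp c.ne_zero), Units.ext rfl⟩, ?_⟩
  rintro ⟨x, rfl⟩
  exact (x : scalarStabilizerField K U).2

theorem natCard_orbit_mul_natCard_units [Finite K] (U : ι → Submodule F V) :
    Nat.card (MulAction.orbit Kˣ U) * Nat.card (scalarStabilizerField K U)ˣ = Nat.card Kˣ := by
  rw [← (MulAction.stabilizer Kˣ U).index_mul_card, MulAction.index_stabilizer,
    Nat.card_coe_set_eq, stabilizer_eq_range_units_map]
  congr 1
  exact (Nat.card_range_of_injective (Units.map_injective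
    (f := ((scalarStabilizerField K U).val : scalarStabilizerField K U →* K))
    fun _ _ => Subtype.ext)).symm

end Field

end Submodule

open Submodule in
theorem cyclotomic_dvd_card_orbit_of_submodule_tuple_general (F K V : Type*) [Field F] [Field K]
    [Algebra F K] [Finite K] [AddCommGroup V] [Module K V] [Module F V]
    [IsScalarTower F K V] (n : ℕ) (U : Fin n → Submodule F V)
    (hU : ∃ (i : Fin n) (c : K) (u : V), u ∈ U i ∧ c • u ∉ U i) :
    ((Polynomial.cyclotomic (Module.finrank F K) ℤ).eval (Nat.card F : ℤ)) ∣
      (Nat.card (Set.range fun c : Kˣ => fun i : Fin n =>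
        Submodule.map ((LinearMap.lsmul K V (c : K)).restrictScalars F) (U i)) : ℤ) := by
  obtain ⟨i, c, u, hu, hcu⟩ := hU
  set L := scalarStabilizerField K U
  have hL : L ≠ ⊤ := fun h =>
    hcu (mem_scalarStabilizerField.mp (h ▸ IntermediateField.mem_top : c ∈ L) i u hu)
  set N := Nat.card (MulAction.orbit Kˣ U)
  have horbit : (N * Nat.card Lˣ : ℤ) = Nat.card Kˣ := by
    exact_mod_cast natCard_orbit_mul_natCard_units U
  have hcardL : (Nat.card Lˣ + 1 : ℤ) = Nat.card F ^ finrank F L := by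
    exact_mod_cast (Nat.card_eq_card_units_add_one L).symm.trans natCard_eq_pow_finrank
  have hcardK : (Nat.card Kˣ + 1 : ℤ) = Nat.card F ^ finrank F K := by
    exact_mod_cast (Nat.card_eq_card_units_add_one K).symm.trans natCard_eq_pow_finrank
  have hLunits : 0 < Nat.card Lˣ := Nat.card_pos
  rw [range_map_lsmul_eq_orbit]
  refine cyclotomic_eval_dvd_of_mul_eq (IntermediateField.finrank_mem_properDivisors hL) ?_ ?_
  · rw [← hcardL]; omega
  · linear_combination horbit - (N : ℤ) * hcardL + hcardK

/-- Let `F ⊆ K` be finite fields with `q = |F|` and `ℓ = [K : F]`, let `V` be a `K`-vector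
space, `n > 0`, and `(U₁, …, Uₙ)` an `n`-tuple of `F`-submodules of `V`.  If some `Uᵢ` is not
closed under scalar multiplication by `K`, then `Φ_ℓ(q)` divides the cardinality of the
diagonal orbit `{(λ·U₁, …, λ·Uₙ) : λ ∈ Kˣ}`. -/
theorem cyclotomic_dvd_card_orbit_of_submodule_tuple (F K V : Type*) [Field F] [Field K]
    [Algebra F K] [Finite F] [Finite K] [AddCommGroup V] [Module K V] [Module F V]
    [IsScalarTower F K V] (n : ℕ) (hn : 0 < n) (U : Fin n → Submodule F V)
    (hU : ∃ (i : Fin n) (c : K) (u : V), u ∈ U i ∧ c • u ∉ U i) :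
    ((Polynomial.cyclotomic (Module.finrank F K) ℤ).eval (Nat.card F : ℤ)) ∣
      (Nat.card (Set.range fun c : Kˣ => fun i : Fin n =>
        Submodule.map ((LinearMap.lsmul K V (c : K)).restrictScalars F) (U i)) : ℤ) :=
  cyclotomic_dvd_card_orbit_of_submodule_tuple_general F K V n U hU
end
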